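/- Under the model where R, R' are conditionally independent Bernoulli given X with common logistic selection probability logistic(ψ₀+ψ₁x) and X | R=1, R'=1 ~ N(μ,σ²), define δ_R = E[X|R=1,R'=1] − E[X|R=1,R'=0] and δ_NR = E[X|R=0,R'=1] − E[X|R=0,R'=0]. Then δ_R = δ_NR = ψ₁σ². -/

import Mathlib

open MeasureTheory Real

noncomputable def normalPDF (μ σ2 x : ℝ) : ℝ :=
  (Real.sqrt (2 * Real.pi * σ2))⁻¹ * Real.exp (-(x - μ)^2 / (2 * σ2))

noncomputable def logisticSel (ψ0 ψ1 x : ℝ) : ℝ :=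
  Real.exp (ψ0 + ψ1 * x) / (1 + Real.exp (ψ0 + ψ1 * x))

noncomputable def selWeight (ψ0 ψ1 : ℝ) (r x : ℝ) : ℝ :=
  if r = 1 then logisticSel ψ0 ψ1 x else 1 - logisticSel ψ0 ψ1 x

/-!
Since `1 - p(x) = e^{-(ψ₀+ψ₁x)} p(x)`, each joint density `p_r(x) p_{r'}(x) f(x)` is the
`(1,1)` density, which is `N(μ, σ²)` up to a constant, times `e^{k(ψ₀+ψ₁x)}` with
`k = r + r' - 2`. Exponentially tilting `N(μ, σ²)` by `e^{bx}` gives a multiple of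
`N(μ + bσ², σ²)`, so the conditional mean in cell `(r, r')` is `μ + (r + r' - 2)ψ₁σ²`,
and both differences equal `ψ₁σ²`.
-/

open ProbabilityTheory

section NormalPDF

variable {σ2 : ℝ}

lemma normalPDF_eq_gaussianPDFReal (μ : ℝ) (hσ2 : 0 ≤ σ2) :
    normalPDF μ σ2 = gaussianPDFReal μ ⟨σ2, hσ2⟩ :=
  rfl

lemma integral_normalPDF (μ : ℝ) (hσ2 : 0 < σ2) : ∫ x, normalPDF μ σ2 x = 1 := by
  rw [normalPDF_eq_gaussianPDFReal μ hσ2.le]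
  exact integral_gaussianPDFReal_eq_one μ (NNReal.coe_ne_zero.mp hσ2.ne')

lemma integral_mul_normalPDF (μ : ℝ) (hσ2 : 0 < σ2) : ∫ x, x * normalPDF μ σ2 x = μ := by
  have hv : (⟨σ2, hσ2.le⟩ : NNReal) ≠ 0 := NNReal.coe_ne_zero.mp hσ2.ne'
  calc ∫ x, x * normalPDF μ σ2 x = ∫ x, x ∂gaussianReal μ ⟨σ2, hσ2.le⟩ := by
        rw [integral_gaussianReal_eq_integral_smul hv, normalPDF_eq_gaussianPDFReal μ hσ2.le]
        simp only [smul_eq_mul, mul_comm]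
    _ = μ := integral_id_gaussianReal

lemma exp_mul_normalPDF (hσ2 : σ2 ≠ 0) (μ a b x : ℝ) :
    exp (a + b * x) * normalPDF μ σ2 x
      = exp (a + b * μ + b ^ 2 * σ2 / 2) * normalPDF (μ + b * σ2) σ2 x := by
  have hexponent : a + b * x + -(x - μ) ^ 2 / (2 * σ2)
      = a + b * μ + b ^ 2 * σ2 / 2 + -(x - (μ + b * σ2)) ^ 2 / (2 * σ2) := by
    field_simp
    ring
  simp only [normalPDF]
  rw [mul_left_comm, ← exp_add, hexponent, exp_add]
  ring

lemma integral_mul_div_integral_of_eq_tilted {g : ℝ → ℝ} {c a b μ : ℝ} (hσ2 : 0 < σ2)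
    (hc : c ≠ 0) (hg : ∀ x, g x = c * (exp (a + b * x) * normalPDF μ σ2 x)) :
    ∫ x, x * (g x / ∫ y, g y) = μ + b * σ2 := by
  set C := c * exp (a + b * μ + b ^ 2 * σ2 / 2)
  have hC : C ≠ 0 := mul_ne_zero hc (exp_pos _).ne'
  have hg' : ∀ x, g x = C * normalPDF (μ + b * σ2) σ2 x := fun x => by
    rw [hg, exp_mul_normalPDF hσ2.ne', mul_assoc]
  have hmass : ∫ y, g y = C := by
    simp only [hg', integral_const_mul, integral_normalPDF _ hσ2, mul_one]
  rw [hmass]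
  simp only [hg', mul_div_cancel_left₀ _ hC]
  exact integral_mul_normalPDF _ hσ2

end NormalPDF

section Selection

variable {ψ0 ψ1 : ℝ}

lemma one_sub_logisticSel (x : ℝ) :
    1 - logisticSel ψ0 ψ1 x = exp (-ψ0 + -ψ1 * x) * logisticSel ψ0 ψ1 x := by
  have hden : 0 < 1 + exp (ψ0 + ψ1 * x) := by positivity
  rw [logisticSel, show -ψ0 + -ψ1 * x = -(ψ0 + ψ1 * x) by ring, exp_neg]
  field_simp
  ring

lemma selWeight_eq {r : ℝ} (hr : r = 0 ∨ r = 1) (x : ℝ) :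
    selWeight ψ0 ψ1 r x = exp ((r - 1) * ψ0 + (r - 1) * ψ1 * x) * logisticSel ψ0 ψ1 x := by
  rcases hr with rfl | rfl
  · rw [selWeight, if_neg zero_ne_one, one_sub_logisticSel]
    ring_nf
  · simp [selWeight]

lemma selWeight_mul_selWeight {r r' : ℝ} (hr : r = 0 ∨ r = 1) (hr' : r' = 0 ∨ r' = 1) (x : ℝ) :
    selWeight ψ0 ψ1 r x * selWeight ψ0 ψ1 r' x
      = exp ((r + r' - 2) * ψ0 + (r + r' - 2) * ψ1 * x)
          * (selWeight ψ0 ψ1 1 x * selWeight ψ0 ψ1 1 x) := by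
  have hexp : exp ((r - 1) * ψ0 + (r - 1) * ψ1 * x) * exp ((r' - 1) * ψ0 + (r' - 1) * ψ1 * x)
      = exp ((r + r' - 2) * ψ0 + (r + r' - 2) * ψ1 * x) := by
    rw [← exp_add]
    ring_nf
  rw [selWeight_eq hr, selWeight_eq hr', selWeight, if_pos rfl, ← hexp]
  ring

end Selection

theorem delta_R_eq_delta_NR_general
    (f : ℝ → ℝ) (μ σ2 ψ0 ψ1 : ℝ) (hσ2 : 0 < σ2)
    (P : ℝ → ℝ → ℝ)
    (hP : ∀ r r', P r r' = ∫ x, selWeight ψ0 ψ1 r x * selWeight ψ0 ψ1 r' x * f x)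
    (hPpos : ∀ r r', (r = 0 ∨ r = 1) → (r' = 0 ∨ r' = 1) → 0 < P r r')
    (hcond11 : ∀ x,
      selWeight ψ0 ψ1 1 x * selWeight ψ0 ψ1 1 x * f x / P 1 1 = normalPDF μ σ2 x)
    (m : ℝ → ℝ → ℝ)
    (hm : ∀ r r', m r r' =
      ∫ x, x * (selWeight ψ0 ψ1 r x * selWeight ψ0 ψ1 r' x * f x / P r r')) :
    m 1 1 - m 1 0 = ψ1 * σ2 ∧ m 0 1 - m 0 0 = ψ1 * σ2 := by
  have hP11 : P 1 1 ≠ 0 := (hPpos 1 1 (Or.inr rfl) (Or.inr rfl)).ne'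
  have hmean : ∀ r r', (r = 0 ∨ r = 1) → (r' = 0 ∨ r' = 1) →
      m r r' = μ + (r + r' - 2) * ψ1 * σ2 := by
    intro r r' hr hr'
    rw [hm, hP]
    refine integral_mul_div_integral_of_eq_tilted (a := (r + r' - 2) * ψ0) hσ2 hP11 fun x => ?_
    rw [selWeight_mul_selWeight hr hr', ← hcond11 x]
    field_simp
  have h0 : (0 : ℝ) = 0 ∨ (0 : ℝ) = 1 := Or.inl rfl
  have h1 : (1 : ℝ) = 0 ∨ (1 : ℝ) = 1 := Or.inr rfl
  rw [hmean 1 1 h1 h1, hmean 1 0 h1 h0, hmean 0 1 h0 h1, hmean 0 0 h0 h0]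
  constructor <;> ring

/-- `δ_R = E[X|R=1,R'=1] − E[X|R=1,R'=0]` and
`δ_NR = E[X|R=0,R'=1] − E[X|R=0,R'=0]` both equal `ψ₁σ²`. -/
theorem delta_R_eq_delta_NR
    (f : ℝ → ℝ) (μ σ2 ψ0 ψ1 : ℝ) (hσ2 : 0 < σ2)
    (hf_nonneg : ∀ x, 0 ≤ f x) (hf_meas : Measurable f) (hInt : Integrable f)
    (P : ℝ → ℝ → ℝ)
    (hP : ∀ r r', P r r' = ∫ x, selWeight ψ0 ψ1 r x * selWeight ψ0 ψ1 r' x * f x)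
    (hPpos : ∀ r r', (r = 0 ∨ r = 1) → (r' = 0 ∨ r' = 1) → 0 < P r r')
    (hcond11 : ∀ x,
      selWeight ψ0 ψ1 1 x * selWeight ψ0 ψ1 1 x * f x / P 1 1 = normalPDF μ σ2 x)
    (m : ℝ → ℝ → ℝ)
    (hm : ∀ r r', m r r' =
      ∫ x, x * (selWeight ψ0 ψ1 r x * selWeight ψ0 ψ1 r' x * f x / P r r')) :
    m 1 1 - m 1 0 = ψ1 * σ2 ∧ m 0 1 - m 0 0 = ψ1 * σ2 :=
  delta_R_eq_delta_NR_general f μ σ2 ψ0 ψ1 hσ2 P hP hPpos hcond11 m hm
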